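/- arXiv:1903.06126 — 2 statements merged into one kernel-verified Lean document; each statement's English description precedes it below -/
import Mathlib

section
/- The solutions of the Kuramoto steady-state system sin(θ₁−θ₂)+sin(θ₁) = 0, sin(θ₂−θ₁)+sin(θ₂) = 0 (i.e., ω = 0, θ₃ = 0) in [0, 2π) × [0, 2π) are exactly the six points (0,0), (0,π), (π,0), (π,π), (2π/3, 4π/3), (4π/3, 2π/3). -/
open Real

lemma sin_zero_cases {x : ℝ} (hx0 : 0 ≤ x) (hx2 : x < 2 * π) (hs : Real.sin x = 0) :
    x = 0 ∨ x = π := by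
  rw [Real.sin_eq_zero_iff] at hs
  obtain ⟨n, hn⟩ := hs
  have hpi := Real.pi_pos
  have hn0 : (0 : ℤ) ≤ n := by
    by_contra h
    push_neg at h
    have hle : n ≤ -1 := by omega
    have : (n : ℝ) ≤ -1 := by exact_mod_cast hle
    nlinarith
  have hn2 : n < 2 := by
    by_contra h
    push_neg at h
    have : (2 : ℝ) ≤ (n : ℝ) := by exact_mod_cast h
    nlinarith
  interval_cases n <;> simp_all

lemma cos_case_pos {x : ℝ} (hx0 : 0 ≤ x) (hx2 : x < 2 * π) (hc : Real.cos x = -(1/2))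
    (hs : 0 < Real.sin x) : x = 2 * π / 3 := by
  have hpi := Real.pi_pos
  have hxpi : x ≤ π := by
    by_contra h
    push_neg at h
    have h1 : Real.sin (x - π) ≥ 0 := Real.sin_nonneg_of_nonneg_of_le_pi (by linarith) (by linarith)
    rw [Real.sin_sub_pi] at h1
    linarith
  have hc23 : Real.cos (2 * π / 3) = -(1/2) := by
    have : (2 : ℝ) * π / 3 = π - π / 3 := by ring
    rw [this, Real.cos_pi_sub, Real.cos_pi_div_three]
  apply Real.injOn_cos ⟨hx0, hxpi⟩ ⟨by positivity, by linarith⟩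
  rw [hc, hc23]

lemma cos_case_neg {x : ℝ} (hx0 : 0 ≤ x) (hx2 : x < 2 * π) (hc : Real.cos x = -(1/2))
    (hs : Real.sin x < 0) : x = 4 * π / 3 := by
  have hpi := Real.pi_pos
  have hxpi : π < x := by
    by_contra h
    push_neg at h
    have := Real.sin_nonneg_of_nonneg_of_le_pi hx0 h
    linarith
  have key : 2 * π - x = 2 * π / 3 := by
    apply cos_case_pos (by linarith) (by linarith)
    · rw [show 2 * π - x = -(x - 2*π) by ring, Real.cos_neg, Real.cos_sub_two_pi, hc]
    · rw [show 2 * π - x = -(x - 2*π) by ring, Real.sin_neg, Real.sin_sub_two_pi]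
      linarith
  linarith

open Real in
theorem stmt_14 :
    {θ : ℝ × ℝ | θ.1 ∈ Set.Ico 0 (2 * π) ∧ θ.2 ∈ Set.Ico 0 (2 * π) ∧
        Real.sin (θ.1 - θ.2) + Real.sin θ.1 = 0 ∧
        Real.sin (θ.2 - θ.1) + Real.sin θ.2 = 0} =
      {((0 : ℝ), (0 : ℝ)), (0, π), (π, 0), (π, π),
        (2 * π / 3, 4 * π / 3), (4 * π / 3, 2 * π / 3)} := by
  have hpi := Real.pi_pos
  have hs23 : Real.sin (2 * π / 3) = Real.sqrt 3 / 2 := by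
    rw [show (2:ℝ) * π / 3 = π - π / 3 by ring, Real.sin_pi_sub, Real.sin_pi_div_three]
  have hc23 : Real.cos (2 * π / 3) = -(1/2) := by
    rw [show (2:ℝ) * π / 3 = π - π / 3 by ring, Real.cos_pi_sub, Real.cos_pi_div_three]
  have hs43 : Real.sin (4 * π / 3) = -(Real.sqrt 3 / 2) := by
    rw [← Real.sin_sub_two_pi, show (4:ℝ) * π / 3 - 2 * π = -(2 * π / 3) by ring,
      Real.sin_neg, hs23]
  have hc43 : Real.cos (4 * π / 3) = -(1/2) := by
    rw [← Real.cos_sub_two_pi, show (4:ℝ) * π / 3 - 2 * π = -(2 * π / 3) by ring,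
      Real.cos_neg, hc23]
  have h3pos : (0:ℝ) < Real.sqrt 3 := by positivity
  ext ⟨x, y⟩
  simp only [Set.mem_setOf_eq, Set.mem_Ico, Set.mem_insert_iff, Set.mem_singleton_iff,
    Prod.mk.injEq]
  constructor
  · rintro ⟨⟨hx0, hx2⟩, ⟨hy0, hy2⟩, h1, h2⟩
    have hsy : Real.sin y = -Real.sin x := by
      have : Real.sin (y - x) = -Real.sin (x - y) := by
        rw [show y - x = -(x - y) by ring, Real.sin_neg]
      linarith
    rw [Real.sin_sub, hsy] at h1
    have hfact : Real.sin x * (Real.cos x + Real.cos y + 1) = 0 := by ring_nf; ring_nf at h1; linarith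
    rcases eq_or_ne (Real.sin x) 0 with hsx | hsx
    · have hsy0 : Real.sin y = 0 := by rw [hsy, hsx, neg_zero]
      rcases sin_zero_cases hx0 hx2 hsx with rfl | rfl <;>
        rcases sin_zero_cases hy0 hy2 hsy0 with rfl | rfl
      · exact Or.inl ⟨rfl, rfl⟩
      · exact Or.inr (Or.inl ⟨rfl, rfl⟩)
      · exact Or.inr (Or.inr (Or.inl ⟨rfl, rfl⟩))
      · exact Or.inr (Or.inr (Or.inr (Or.inl ⟨rfl, rfl⟩)))
    · have hsum : Real.cos x + Real.cos y + 1 = 0 := by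
        rcases mul_eq_zero.mp hfact with h | h
        · exact absurd h hsx
        · exact h
      have hpx := Real.sin_sq_add_cos_sq x
      have hpy := Real.sin_sq_add_cos_sq y
      have hsq : Real.sin y ^ 2 = Real.sin x ^ 2 := by rw [hsy]; ring
      have hsqc : Real.cos x ^ 2 = Real.cos y ^ 2 := by linarith
      have hcy' : Real.cos y = -1 - Real.cos x := by linarith
      have hcx : Real.cos x = -(1/2) := by rw [hcy'] at hsqc; nlinarith [hsqc]
      have hcy : Real.cos y = -(1/2) := by linarith
      rcases hsx.lt_or_gt with h | h
      · have hx' := cos_case_neg hx0 hx2 hcx h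
        have hy' := cos_case_pos hy0 hy2 hcy (by rw [hsy]; linarith)
        exact Or.inr (Or.inr (Or.inr (Or.inr (Or.inr ⟨hx', hy'⟩))))
      · have hx' := cos_case_pos hx0 hx2 hcx h
        have hy' := cos_case_neg hy0 hy2 hcy (by rw [hsy]; linarith)
        exact Or.inr (Or.inr (Or.inr (Or.inr (Or.inl ⟨hx', hy'⟩))))
  · rintro (⟨rfl, rfl⟩ | ⟨rfl, rfl⟩ | ⟨rfl, rfl⟩ | ⟨rfl, rfl⟩ | ⟨rfl, rfl⟩ | ⟨rfl, rfl⟩)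
    · exact ⟨⟨le_refl 0, by linarith⟩, ⟨le_refl 0, by linarith⟩, by simp, by simp⟩
    · refine ⟨⟨le_refl 0, by linarith⟩, ⟨by linarith, by linarith⟩, ?_, ?_⟩
      · rw [zero_sub, Real.sin_neg, Real.sin_pi, Real.sin_zero]; ring
      · rw [sub_zero, Real.sin_pi]; ring
    · refine ⟨⟨by linarith, by linarith⟩, ⟨le_refl 0, by linarith⟩, ?_, ?_⟩
      · rw [sub_zero, Real.sin_pi]; ring
      · rw [zero_sub, Real.sin_neg, Real.sin_pi, Real.sin_zero]; ring
    · refine ⟨⟨by linarith, by linarith⟩, ⟨by linarith, by linarith⟩, ?_, ?_⟩ <;>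
        rw [sub_self, Real.sin_zero, Real.sin_pi] <;> ring
    · refine ⟨⟨by linarith, by linarith⟩, ⟨by linarith, by linarith⟩, ?_, ?_⟩
      · rw [show 2 * π / 3 - 4 * π / 3 = -(2 * π / 3) by ring, Real.sin_neg, hs23]; ring
      · rw [show 4 * π / 3 - 2 * π / 3 = 2 * π / 3 by ring, hs23, hs43]; ring
    · refine ⟨⟨by linarith, by linarith⟩, ⟨by linarith, by linarith⟩, ?_, ?_⟩
      · rw [show 4 * π / 3 - 2 * π / 3 = 2 * π / 3 by ring, hs23, hs43]; ring
      · rw [show 2 * π / 3 - 4 * π / 3 = -(2 * π / 3) by ring, Real.sin_neg, hs23]; ring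
end

section
/- For the algebraic Kuramoto system at ω = (0,0): the system (s₁c₂ − c₁s₂) + s₁ = 0, (s₂c₁ − c₂s₁) + s₂ = 0, s₁² + c₁² = 1, s₂² + c₂² = 1 has exactly 6 real solutions, namely (0,1,0,1), (0,1,0,−1), (0,−1,0,1), (0,−1,0,−1), (√3/2,−1/2,−√3/2,−1/2), (−√3/2,−1/2,√3/2,−1/2). -/
/-!
Adding the two equations gives `s₂ = -s₁`, after which the first one factors as
`s₁ (c₁ + c₂ + 1) = 0`. If `s₁ = 0`, both cosines are `±1`. Otherwise `c₁ + c₂ = -1`, while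
`c₁² = 1 - s₁² = c₂²` forces `c₁ = c₂`; hence `c₁ = c₂ = -1/2` and `s₁ = ±√3/2`.
-/

section SteadyState

variable {K : Type*} [Field K] [CharZero K] {s₁ c₁ s₂ c₂ : K}

theorem kuramoto_steady_state_cases
    (h₁ : (s₁ * c₂ - c₁ * s₂) + s₁ = 0) (h₂ : (s₂ * c₁ - c₂ * s₁) + s₂ = 0)
    (h₃ : s₁ ^ 2 + c₁ ^ 2 = 1) (h₄ : s₂ ^ 2 + c₂ ^ 2 = 1) :
    (s₁ = 0 ∧ s₂ = 0 ∧ c₁ ^ 2 = 1 ∧ c₂ ^ 2 = 1) ∨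
      (s₂ = -s₁ ∧ c₁ = -1 / 2 ∧ c₂ = -1 / 2 ∧ s₁ ^ 2 = 3 / 4) := by
  have hs : s₂ = -s₁ := by linear_combination h₁ + h₂
  subst hs
  have hfactor : s₁ * (c₁ + c₂ + 1) = 0 := by linear_combination h₁
  rcases mul_eq_zero.mp hfactor with rfl | hsum
  · left
    exact ⟨rfl, neg_zero, by linear_combination h₃, by linear_combination h₄⟩
  · right
    have hcc : c₁ = c₂ := by
      have hdiff : (c₁ - c₂) * (c₁ + c₂) = 0 := by linear_combination h₃ - h₄
      have hsum_ne : c₁ + c₂ ≠ 0 := by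
        rw [eq_neg_of_add_eq_zero_left hsum]
        exact neg_ne_zero.mpr one_ne_zero
      exact sub_eq_zero.mp ((mul_eq_zero.mp hdiff).resolve_right hsum_ne)
    subst hcc
    have hc : c₁ = -1 / 2 := by
      field_simp
      linear_combination hsum
    subst hc
    exact ⟨rfl, rfl, rfl, by linear_combination h₃⟩

end SteadyState

theorem Real.sq_eq_three_quarters_iff {x : ℝ} :
    x ^ 2 = 3 / 4 ↔ x = √3 / 2 ∨ x = -(√3 / 2) := by
  rw [← sq_eq_sq_iff_eq_or_eq_neg, div_pow, Real.sq_sqrt (by norm_num : (0 : ℝ) ≤ 3)]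
  norm_num

theorem stmt_15 :
    {v : ℝ × ℝ × ℝ × ℝ |
        (v.1 * v.2.2.2 - v.2.1 * v.2.2.1) + v.1 = 0 ∧
        (v.2.2.1 * v.2.1 - v.2.2.2 * v.1) + v.2.2.1 = 0 ∧
        v.1 ^ 2 + v.2.1 ^ 2 = 1 ∧
        v.2.2.1 ^ 2 + v.2.2.2 ^ 2 = 1} =
      {((0 : ℝ), (1 : ℝ), (0 : ℝ), (1 : ℝ)), (0, 1, 0, -1), (0, -1, 0, 1), (0, -1, 0, -1),
        (Real.sqrt 3 / 2, -1 / 2, -(Real.sqrt 3) / 2, -1 / 2),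
        (-(Real.sqrt 3) / 2, -1 / 2, Real.sqrt 3 / 2, -1 / 2)} := by
  have hsqrt : √3 ^ 2 = 3 := Real.sq_sqrt (by norm_num)
  ext ⟨s₁, c₁, s₂, c₂⟩
  simp only [Set.mem_ofPred_eq, Set.mem_insert_iff, Set.mem_singleton_iff, Prod.mk.injEq]
  constructor
  · rintro ⟨h₁, h₂, h₃, h₄⟩
    rcases kuramoto_steady_state_cases h₁ h₂ h₃ h₄ with
      ⟨rfl, rfl, hc₁, hc₂⟩ | ⟨rfl, rfl, rfl, hs⟩
    · rw [sq_eq_one_iff] at hc₁ hc₂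
      rcases hc₁ with rfl | rfl <;> rcases hc₂ with rfl | rfl <;> norm_num
    · rcases Real.sq_eq_three_quarters_iff.mp hs with rfl | rfl <;> norm_num [neg_div]
  · rintro (h | h | h | h | h | h) <;> obtain ⟨rfl, rfl, rfl, rfl⟩ := h <;>
      refine ⟨by ring, by ring, ?_, ?_⟩ <;> norm_num [div_pow, hsqrt]
end
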